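/- Let (A, μ, α) be a multiplicative Hom-flexible algebra over a field k of characteristic 0. Then A is Hom-power associative if and only if x⁴ = α(x²)α(x²) for all x ∈ A, where x² = xx, x³ = x²α(x), x⁴ = x³α²(x). -/

import Mathlib

variable {k A : Type*} [Field k] [CharZero k] [AddCommGroup A] [Module k A]

/-- The `n`-th Hom-power: `x^1 = x`, `x^n = x^{n-1} · α^{n-2}(x)`. -/
def homPow (μ : A →ₗ[k] A →ₗ[k] A) (α : A →ₗ[k] A) (x : A) : ℕ → A
  | 0 => x
  | 1 => x
  | n + 2 => μ (homPow μ α x (n + 1)) ((α ^ n) x)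

/-- `A` is `n`-th Hom-power associative. -/
def IsNthHomPowerAssoc (μ : A →ₗ[k] A →ₗ[k] A) (α : A →ₗ[k] A) (n : ℕ) : Prop :=
  ∀ (x : A) (i : ℕ), 1 ≤ i → i ≤ n - 1 →
    homPow μ α x n =
      μ ((α ^ (n - i - 1)) (homPow μ α x i)) ((α ^ (i - 1)) (homPow μ α x (n - i)))

/-- `A` is Hom-power associative. -/
def IsHomPowerAssoc (μ : A →ₗ[k] A →ₗ[k] A) (α : A →ₗ[k] A) : Prop :=
  ∀ n : ℕ, 2 ≤ n → IsNthHomPowerAssoc μ α n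

/-- `A` is up to `n`-th Hom-power associative. -/
def IsUpToNthHomPowerAssoc (μ : A →ₗ[k] A →ₗ[k] A) (α : A →ₗ[k] A) (n : ℕ) : Prop :=
  ∀ m : ℕ, 2 ≤ m → m ≤ n → IsNthHomPowerAssoc μ α m

/-- The Hom-algebra `(A, μ, α)` is multiplicative. -/
def IsMultiplicative (μ : A →ₗ[k] A →ₗ[k] A) (α : A →ₗ[k] A) : Prop :=
  ∀ x y : A, α (μ x y) = μ (α x) (α y)


/-- The Hom-associator `as(x,y,z) = (xy)α(z) − α(x)(yz)`. -/
def homAssoc (μ : A →ₗ[k] A →ₗ[k] A) (α : A →ₗ[k] A) (x y z : A) : A :=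
  μ (μ x y) (α z) - μ (α x) (μ y z)

/-!
Hom-flexibility gives `α^n(x) x^(n+1) = x^(n+2)`, so the Hom-powers of `A` coincide with those of
the plus algebra `A⁺` with product `(xy + yx)/2`, which is commutative, multiplicative and again
satisfies `x⁴ = α(x²)α(x²)`.

In the commutative case this identity forces Hom-power associativity (a Hom-version of Albert's
theorem). By induction on `n`: linearizing the degree-four identity at
`(α^j(x^(i+1)), α^i(x^(j+1)), α^(i+j)(x), α^(i+j)(x))` and collapsing all products of lower degree
shows that `v p = α^q(x^(p+1)) α^p(x^(q+1)) - x^n` (`p + q + 2 = n`) satisfies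
`3 v (p+2) + 3 v p = 4 v 1 + 8 v (p+1)` with `v 0 = v (n-2) = 0`. Then `v p = c_p v 1` with
`c_p ≥ p`, so in characteristic zero `v = 0`.

Back in `A`, linearized Hom-flexibility shows, again by induction on the degree, that the two
factors `α^q(x^(p+1))` and `α^p(x^(q+1))` commute, so their products in `A` and `A⁺` agree.
-/

def IsHomFlexible (μ : A →ₗ[k] A →ₗ[k] A) (α : A →ₗ[k] A) : Prop :=
  ∀ x y : A, homAssoc μ α x y x = 0

def homPowProd (μ : A →ₗ[k] A →ₗ[k] A) (α : A →ₗ[k] A) (x : A) (p q : ℕ) : A :=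
  μ ((α ^ q) (homPow μ α x (p + 1))) ((α ^ p) (homPow μ α x (q + 1)))

/-- `IsNthHomPowerAssoc μ α n` reindexed by `i = p + 1`, `n = p + q + 2`, which avoids truncated
subtraction. -/
def IsHomPowerAssocAt (μ : A →ₗ[k] A →ₗ[k] A) (α : A →ₗ[k] A) (n : ℕ) : Prop :=
  ∀ (x : A) (p q : ℕ), p + q + 2 = n → homPowProd μ α x p q = homPow μ α x n

namespace Module.End

variable {R M : Type*} [Semiring R] [AddCommMonoid M] [Module R M] (f : Module.End R M)

lemma pow_apply_pow_apply (a b : ℕ) (m : M) : (f ^ a) ((f ^ b) m) = (f ^ (b + a)) m := by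
  rw [pow_add, mul_apply, ← mul_apply, ← mul_apply, pow_mul_comm]

lemma apply_pow_apply (b : ℕ) (m : M) : f ((f ^ b) m) = (f ^ (b + 1)) m := by
  rw [pow_succ', mul_apply]

end Module.End

open Module.End

section Basic

variable {K V : Type*} [Field K] [AddCommGroup V] [Module K V]

variable (μ : V →ₗ[K] V →ₗ[K] V) (α : V →ₗ[K] V) (x : V)

@[simp] lemma homPow_one : homPow μ α x 1 = x := rfl

lemma homPow_add_two (n : ℕ) : homPow μ α x (n + 2) = μ (homPow μ α x (n + 1)) ((α ^ n) x) :=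
  rfl

@[simp] lemma homPow_two : homPow μ α x 2 = μ x x := by
  simp [homPow_add_two]

lemma homPow_four : homPow μ α x 4 = μ (μ (μ x x) (α x)) ((α ^ 2) x) := by
  simp [homPow_add_two]

lemma homPowProd_zero_right (p : ℕ) : homPowProd μ α x p 0 = homPow μ α x (p + 2) := by
  simp [homPowProd, homPow_add_two]

variable {μ α}

lemma IsHomPowerAssocAt.isNthHomPowerAssoc {n : ℕ} (h : IsHomPowerAssocAt μ α n) :
    IsNthHomPowerAssoc μ α n := by
  intro x i hi hin
  obtain ⟨p, rfl⟩ : ∃ p, i = p + 1 := ⟨i - 1, by omega⟩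
  obtain ⟨q, rfl⟩ : ∃ q, n = p + q + 2 := ⟨n - p - 2, by omega⟩
  rw [← h x p q rfl, homPowProd, show p + q + 2 - (p + 1) - 1 = q by omega,
    show p + q + 2 - (p + 1) = q + 1 by omega, Nat.add_sub_cancel]

lemma IsMultiplicative.pow_apply (hm : IsMultiplicative μ α) (c : ℕ) (a b : V) :
    (α ^ c) (μ a b) = μ ((α ^ c) a) ((α ^ c) b) := by
  induction c generalizing a b with
  | zero => simp
  | succ c ih => rw [pow_succ', mul_apply, ih, hm, mul_apply, mul_apply]

lemma IsHomPowerAssocAt.mul_pow_apply_homPow {n p q : ℕ} (h : IsHomPowerAssocAt μ α n)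
    (hm : IsMultiplicative μ α) (hpq : p + q + 2 = n) (x : V) {c e f : ℕ} (he : e = q + c)
    (hf : f = p + c) :
    μ ((α ^ e) (homPow μ α x (p + 1))) ((α ^ f) (homPow μ α x (q + 1))) =
      (α ^ c) (homPow μ α x n) := by
  rw [he, hf, ← pow_apply_pow_apply α c q, ← pow_apply_pow_apply α c p, ← hm.pow_apply,
    ← h x p q hpq, homPowProd]

end Basic

section HomFlexible

variable {K V : Type*} [Field K] [AddCommGroup V] [Module K V]
  {μ : V →ₗ[K] V →ₗ[K] V} {α : V →ₗ[K] V}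

lemma IsHomFlexible.linearized (h : IsHomFlexible μ α) (x y z : V) :
    μ (μ x y) (α z) + μ (μ z y) (α x) = μ (α x) (μ y z) + μ (α z) (μ y x) := by
  linear_combination (norm := (simp only [homAssoc, map_add, LinearMap.add_apply]; abel))
    h (x + z) y - h x y - h z y

lemma IsHomFlexible.pow_apply_mul_homPow (h : IsHomFlexible μ α) (x : V) (n : ℕ) :
    μ ((α ^ n) x) (homPow μ α x (n + 1)) = homPow μ α x (n + 2) := by
  induction n with
  | zero => simp
  | succ n ih =>
    have hflex := sub_eq_zero.mp (h ((α ^ n) x) (homPow μ α x (n + 1)))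
    rw [apply_pow_apply, ih, ← homPow_add_two] at hflex
    exact hflex.symm

lemma IsHomFlexible.homPowProd_zero_left (h : IsHomFlexible μ α) (x : V) (q : ℕ) :
    homPowProd μ α x 0 q = homPow μ α x (q + 2) := by
  simpa [homPowProd] using h.pow_apply_mul_homPow x q

end HomFlexible

noncomputable def plusMul (μ : A →ₗ[k] A →ₗ[k] A) : A →ₗ[k] A →ₗ[k] A :=
  (2 : k)⁻¹ • (μ + μ.flip)

section PlusAlgebra

variable {K V : Type*} [Field K] [AddCommGroup V] [Module K V]
  {μ : V →ₗ[K] V →ₗ[K] V} {α : V →ₗ[K] V}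

lemma plusMul_apply (a b : V) : plusMul μ a b = (2 : K)⁻¹ • (μ a b + μ b a) := rfl

lemma plusMul_comm (a b : V) : plusMul μ a b = plusMul μ b a := by
  rw [plusMul_apply, plusMul_apply, add_comm]

lemma IsMultiplicative.plusMul (hm : IsMultiplicative μ α) :
    IsMultiplicative (plusMul μ) α := by
  intro a b
  rw [plusMul_apply, plusMul_apply, map_smul, map_add, hm, hm]

variable [NeZero (2 : K)]

lemma inv_two_smul_add_self (y : V) : (2 : K)⁻¹ • (y + y) = y := by
  rw [← two_smul K y, smul_smul, inv_mul_cancel₀ two_ne_zero, one_smul]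

lemma IsHomFlexible.homPow_plusMul (h : IsHomFlexible μ α) (x : V) (n : ℕ) :
    homPow (plusMul μ) α x n = homPow μ α x n := by
  induction n using Nat.strong_induction_on with
  | _ n ih =>
    match n with
    | 0 | 1 => rfl
    | n + 2 =>
      rw [homPow_add_two, ih (n + 1) (by omega), plusMul_apply, h.pow_apply_mul_homPow,
        ← homPow_add_two, inv_two_smul_add_self]

lemma IsHomFlexible.homPowProd_plusMul (h : IsHomFlexible μ α) (x : V) (p q : ℕ) :
    homPowProd (plusMul μ) α x p q =
      (2 : K)⁻¹ • (homPowProd μ α x p q + homPowProd μ α x q p) := by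
  simp only [homPowProd, h.homPow_plusMul, plusMul_apply]

lemma IsHomFlexible.homPow_four_plusMul (h : IsHomFlexible μ α)
    (h4 : ∀ x : V, homPow μ α x 4 = μ (α (μ x x)) (α (μ x x))) (x : V) :
    homPow (plusMul μ) α x 4 = plusMul μ (α (plusMul μ x x)) (α (plusMul μ x x)) := by
  rw [h.homPow_plusMul, h4, plusMul_apply x, inv_two_smul_add_self, plusMul_apply,
    inv_two_smul_add_self]

end PlusAlgebra

/-- `v p = recCoeff p • v 1` for every solution of `3 v (p+2) + 3 v p = 4 v 1 + 8 v (p+1)` with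
`v 0 = 0`. -/
def recCoeff : ℕ → ℚ
  | 0 => 0
  | 1 => 1
  | p + 2 => (4 + 8 * recCoeff (p + 1) - 3 * recCoeff p) / 3

lemma le_recCoeff (p : ℕ) : (p : ℚ) ≤ recCoeff p := by
  suffices h : ∀ q : ℕ, (q : ℚ) ≤ recCoeff q ∧ recCoeff q + 1 ≤ recCoeff (q + 1) from (h p).1
  intro q
  induction q with
  | zero => norm_num [recCoeff]
  | succ q ih =>
    have hstep : recCoeff (q + 2) = (4 + 8 * recCoeff (q + 1) - 3 * recCoeff q) / 3 := rfl
    push_cast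
    exact ⟨by linarith, by rw [hstep]; linarith⟩

section Recurrence

variable {K V : Type*} [Field K] [CharZero K] [AddCommGroup V] [Module K V]

lemma eq_recCoeff_smul_of_recurrence (v : ℕ → V) (N : ℕ) (h0 : v 0 = 0)
    (hrec : ∀ p, p + 2 ≤ N → (3 : K) • v (p + 2) + (3 : K) • v p =
      (4 : K) • v 1 + (8 : K) • v (p + 1))
    (p : ℕ) (hp : p ≤ N) : v p = (recCoeff p : K) • v 1 := by
  induction p using Nat.strong_induction_on with
  | _ p ih =>
    match p with
    | 0 => simp [h0, recCoeff]
    | 1 => simp [recCoeff]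
    | p + 2 =>
      have hstep : recCoeff (p + 2) = (4 + 8 * recCoeff (p + 1) - 3 * recCoeff p) / 3 := rfl
      rw [hstep]
      push_cast
      linear_combination (norm := module) (3 : K)⁻¹ • hrec p hp +
        (8 / 3 : K) • ih (p + 1) (by omega) (by omega) - ih p (by omega) (by omega)

lemma eq_zero_of_recurrence (v : ℕ → V) (N : ℕ) (h0 : v 0 = 0) (hN : v N = 0)
    (hrec : ∀ p, p + 2 ≤ N → (3 : K) • v (p + 2) + (3 : K) • v p =
      (4 : K) • v 1 + (8 : K) • v (p + 1))
    (p : ℕ) (hp : p ≤ N) : v p = 0 := by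
  have hv := eq_recCoeff_smul_of_recurrence v N h0 hrec
  rcases Nat.eq_zero_or_pos N with rfl | hN1
  · rwa [Nat.le_zero.mp hp]
  have hcoeff : (recCoeff N : K) ≠ 0 := by
    have h1 : (1 : ℚ) ≤ N := by exact_mod_cast hN1
    exact Rat.cast_ne_zero.mpr (by linarith [le_recCoeff N])
  have hv1 : v 1 = 0 := (smul_eq_zero.mp ((hv N le_rfl).symm.trans hN)).resolve_left hcoeff
  rw [hv p hp, hv1, smul_zero]

end Recurrence

section Commutative

variable {K V : Type*} [Field K] [AddCommGroup V] [Module K V]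
  {ν : V →ₗ[K] V →ₗ[K] V} {α : V →ₗ[K] V}

/-- Linearization of `α(y²)α(y²) = (y²α(y))α²(y)` at `y = (a, b, c, c)`, collected using
commutativity. -/
lemma linearized_homPow_four (hc : ∀ a b : V, ν a b = ν b a)
    (h4 : ∀ y : V, homPow ν α y 4 = ν (α (ν y y)) (α (ν y y))) (a b c : V) :
    8 • ν (α (ν c c)) (α (ν a b)) + 16 • ν (α (ν a c)) (α (ν b c)) =
      2 • ν (ν (ν c c) (α a)) ((α ^ 2) b) + 2 • ν ((α ^ 2) a) (ν (ν c c) (α b)) +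
      4 • ν (ν (ν a c) (α c)) ((α ^ 2) b) + 4 • ν ((α ^ 2) a) (ν (ν b c) (α c)) +
      4 • ν (ν (ν b c) (α a)) ((α ^ 2) c) + 4 • ν (ν (ν a c) (α b)) ((α ^ 2) c) +
      4 • ν (ν (ν a b) (α c)) ((α ^ 2) c) := by
  have hF (y : V) := (h4 y).symm.trans (homPow_four ν α y)
  linear_combination (norm := (simp only [map_add, LinearMap.add_apply, hc]; abel))
    hF (a + b + c + c) - 2 • hF (a + b + c) - hF (a + c + c) - hF (b + c + c) + hF (a + b) +
      2 • hF (a + c) + 2 • hF (b + c) + hF (c + c) - hF a - hF b - 2 • hF c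

/-- The linearization evaluated at `a = α^j(x^(i+1))`, `b = α^i(x^(j+1))`, `c = α^(i+j)(x)`:
every product of lower degree collapses by induction. -/
lemma homPowProd_linear_relation (hm : IsMultiplicative ν α) (hc : ∀ a b : V, ν a b = ν b a)
    (h4 : ∀ y : V, homPow ν α y 4 = ν (α (ν y y)) (α (ν y y))) {n : ℕ}
    (ih : ∀ m < n, IsHomPowerAssocAt ν α m) (x : V) (i j : ℕ) (hij : i + j + 4 = n) :
    8 • homPowProd ν α x 1 (i + j + 1) + 16 • homPowProd ν α x (i + 1) (j + 1) =
      12 • homPow ν α x n + 6 • homPowProd ν α x (i + 2) j + 6 • homPowProd ν α x i (j + 2) := by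
  subst hij
  have mul (p q : ℕ) {m c e f : ℕ} (hpq : p + q + 2 = m) (hlt : m < i + j + 4) (he : e = q + c)
      (hf : f = p + c) := (ih m hlt).mul_pow_apply_homPow hm hpq x he hf
  have hab : ν ((α ^ j) (homPow ν α x (i + 1))) ((α ^ i) (homPow ν α x (j + 1))) =
      (α ^ 0) (homPow ν α x (i + j + 2)) := mul i j rfl (by omega) rfl rfl
  have hcc : ν ((α ^ (i + j)) x) ((α ^ (i + j)) x) = (α ^ (i + j)) (homPow ν α x 2) :=
    mul 0 0 rfl (by omega) (by omega) (by omega)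
  have hac : ν ((α ^ j) (homPow ν α x (i + 1))) ((α ^ (i + j)) x) =
      (α ^ j) (homPow ν α x (i + 2)) := mul i 0 rfl (by omega) (by omega) (by omega)
  have hbc : ν ((α ^ i) (homPow ν α x (j + 1))) ((α ^ (i + j)) x) =
      (α ^ i) (homPow ν α x (j + 2)) := mul j 0 rfl (by omega) (by omega) (by omega)
  have hcca : ν ((α ^ (i + j)) (homPow ν α x 2)) ((α ^ (j + 1)) (homPow ν α x (i + 1))) =
      (α ^ j) (homPow ν α x (i + 3)) := mul 1 i (by omega) (by omega) (by omega) (by omega)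
  have hccb : ν ((α ^ (i + j)) (homPow ν α x 2)) ((α ^ (i + 1)) (homPow ν α x (j + 1))) =
      (α ^ i) (homPow ν α x (j + 3)) := mul 1 j (by omega) (by omega) (by omega) (by omega)
  have hacc : ν ((α ^ j) (homPow ν α x (i + 2))) ((α ^ (i + j + 1)) x) =
      (α ^ j) (homPow ν α x (i + 3)) := mul (i + 1) 0 rfl (by omega) (by omega) (by omega)
  have hbcc : ν ((α ^ i) (homPow ν α x (j + 2))) ((α ^ (i + j + 1)) x) =
      (α ^ i) (homPow ν α x (j + 3)) := mul (j + 1) 0 rfl (by omega) (by omega) (by omega)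
  have hbca : ν ((α ^ i) (homPow ν α x (j + 2))) ((α ^ (j + 1)) (homPow ν α x (i + 1))) =
      (α ^ 0) (homPow ν α x (i + j + 3)) :=
    mul (j + 1) i (by omega) (by omega) (by omega) (by omega)
  have hacb : ν ((α ^ j) (homPow ν α x (i + 2))) ((α ^ (i + 1)) (homPow ν α x (j + 1))) =
      (α ^ 0) (homPow ν α x (i + j + 3)) :=
    mul (i + 1) j (by omega) (by omega) (by omega) (by omega)
  have habc : ν (homPow ν α x (i + j + 2)) ((α ^ (i + j + 1)) x) = homPow ν α x (i + j + 3) := rfl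
  have hlin := linearized_homPow_four hc h4 ((α ^ j) (homPow ν α x (i + 1)))
    ((α ^ i) (homPow ν α x (j + 1))) ((α ^ (i + j)) x)
  simp only [hab, hcc, hac, hbc, apply_pow_apply, pow_apply_pow_apply, pow_zero, one_apply, hcca,
    hccb, hacc, hbcc, hbca, hacb, habc] at hlin
  rw [show homPow ν α x (i + j + 4) = ν (homPow ν α x (i + j + 3)) ((α ^ (i + j + 2)) x) from rfl]
  simp only [homPowProd, pow_one]
  linear_combination (norm := module) hlin

lemma isHomPowerAssocAt_of_comm [CharZero K] (hm : IsMultiplicative ν α)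
    (hc : ∀ a b : V, ν a b = ν b a) (h4 : ∀ y : V, homPow ν α y 4 = ν (α (ν y y)) (α (ν y y)))
    (n : ℕ) : IsHomPowerAssocAt ν α n := by
  induction n using Nat.strong_induction_on with
  | _ n ih =>
    intro x p q hpq
    let v (r : ℕ) : V := homPowProd ν α x r (n - 2 - r) - homPow ν α x n
    have hv0 : v 0 = 0 := by
      rw [sub_eq_zero, homPowProd, hc, ← homPowProd, homPowProd_zero_right, Nat.sub_zero,
        Nat.sub_add_cancel (by omega)]
    have hvN : v (n - 2) = 0 := by
      rw [sub_eq_zero, Nat.sub_self, homPowProd_zero_right, Nat.sub_add_cancel (by omega)]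
    have hrec (r : ℕ) (hr : r + 2 ≤ n - 2) :
        (3 : K) • v (r + 2) + (3 : K) • v r = (4 : K) • v 1 + (8 : K) • v (r + 1) := by
      have h := homPowProd_linear_relation hm hc h4 ih x r (n - 4 - r) (by omega)
      simp only [v, show n - 2 - (r + 2) = n - 4 - r by omega,
        show n - 2 - 1 = r + (n - 4 - r) + 1 by omega,
        show n - 2 - (r + 1) = n - 4 - r + 1 by omega, show n - 2 - r = n - 4 - r + 2 by omega]
      linear_combination (norm := module) (-(2 : K)⁻¹) • h
    have hvp := eq_zero_of_recurrence (K := K) v (n - 2) hv0 hvN hrec p (by omega)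
    rwa [sub_eq_zero, show n - 2 - p = q by omega] at hvp

end Commutative

section PowerAssociativity

variable {K V : Type*} [Field K] [AddCommGroup V] [Module K V]
  {μ : V →ₗ[K] V →ₗ[K] V} {α : V →ₗ[K] V}

/-- Linearized flexibility at `(α^b(x^(a+2)), α^(a+1)(x^(b+1)), α^(a+b+1)(x))`. -/
lemma IsHomFlexible.homPowProd_succ_comm (hflex : IsHomFlexible μ α) (hm : IsMultiplicative μ α)
    {a b : ℕ} (h : IsHomPowerAssocAt μ α (a + b + 3)) (x : V) :
    homPowProd μ α x (a + 1) (b + 1) = homPowProd μ α x (b + 1) (a + 1) := by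
  have hXY : μ ((α ^ b) (homPow μ α x (a + 2))) ((α ^ (a + 1)) (homPow μ α x (b + 1))) =
      homPow μ α x (a + b + 3) := h x (a + 1) b (by omega)
  have hYX : μ ((α ^ (a + 1)) (homPow μ α x (b + 1))) ((α ^ b) (homPow μ α x (a + 2))) =
      homPow μ α x (a + b + 3) := h x b (a + 1) (by omega)
  have hZY : μ ((α ^ (a + b + 1)) x) ((α ^ (a + 1)) (homPow μ α x (b + 1))) =
      (α ^ (a + 1)) (homPow μ α x (b + 2)) := by
    rw [show a + b + 1 = b + (a + 1) by omega, ← pow_apply_pow_apply α (a + 1) b,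
      ← hm.pow_apply, hflex.pow_apply_mul_homPow]
  have hYZ : μ ((α ^ (a + 1)) (homPow μ α x (b + 1))) ((α ^ (a + b + 1)) x) =
      (α ^ (a + 1)) (homPow μ α x (b + 2)) := by
    rw [show a + b + 1 = b + (a + 1) by omega, ← pow_apply_pow_apply α (a + 1) b,
      ← hm.pow_apply, ← homPow_add_two]
  have hαZ : α ((α ^ (a + b + 1)) x) = (α ^ (a + b + 2)) x := apply_pow_apply α _ x
  have hXYZ : μ (homPow μ α x (a + b + 3)) ((α ^ (a + b + 2)) x) = homPow μ α x (a + b + 4) :=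
    rfl
  have hZYX : μ ((α ^ (a + b + 2)) x) (homPow μ α x (a + b + 3)) = homPow μ α x (a + b + 4) :=
    hflex.pow_apply_mul_homPow x (a + b + 2)
  have hl := hflex.linearized ((α ^ b) (homPow μ α x (a + 2)))
    ((α ^ (a + 1)) (homPow μ α x (b + 1))) ((α ^ (a + b + 1)) x)
  rw [hXY, hYX, hZY, hYZ, hαZ, hXYZ, hZYX, apply_pow_apply] at hl
  exact (add_left_cancel (hl.trans (add_comm _ _))).symm

lemma IsHomFlexible.homPowProd_comm (hflex : IsHomFlexible μ α) (hm : IsMultiplicative μ α)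
    {n : ℕ} (ih : ∀ m < n, IsHomPowerAssocAt μ α m) (x : V) {p q : ℕ} (hpq : p + q + 2 = n) :
    homPowProd μ α x p q = homPowProd μ α x q p := by
  match p, q with
  | 0, q => rw [hflex.homPowProd_zero_left, homPowProd_zero_right]
  | p, 0 => rw [hflex.homPowProd_zero_left, homPowProd_zero_right]
  | a + 1, b + 1 => exact hflex.homPowProd_succ_comm hm (ih (a + b + 3) (by omega)) x

lemma IsHomFlexible.isHomPowerAssocAt [CharZero K] (hflex : IsHomFlexible μ α)
    (hm : IsMultiplicative μ α) (h4 : ∀ x : V, homPow μ α x 4 = μ (α (μ x x)) (α (μ x x)))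
    (n : ℕ) : IsHomPowerAssocAt μ α n := by
  induction n using Nat.strong_induction_on with
  | _ n ih =>
    intro x p q hpq
    have hplus := isHomPowerAssocAt_of_comm hm.plusMul plusMul_comm
      (hflex.homPow_four_plusMul h4) n x p q hpq
    rwa [hflex.homPowProd_plusMul, hflex.homPow_plusMul, ← hflex.homPowProd_comm hm ih x hpq,
      inv_two_smul_add_self] at hplus

end PowerAssociativity

/-- Corollary: a multiplicative Hom-flexible algebra is Hom-power associative iff
`x⁴ = α(x²)α(x²)` for all `x`. -/
theorem stmt18 (μ : A →ₗ[k] A →ₗ[k] A) (α : A →ₗ[k] A)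
    (hmul : IsMultiplicative μ α)
    (hflex : ∀ x y : A, homAssoc μ α x y x = 0) :
    IsHomPowerAssoc μ α ↔
      ∀ x : A, homPow μ α x 4 = μ (α (μ x x)) (α (μ x x)) := by
  constructor
  · intro h x
    simpa using h 4 (by norm_num) x 2 (by norm_num) (by norm_num)
  · intro h4 n _
    exact (IsHomFlexible.isHomPowerAssocAt hflex hmul h4 n).isNthHomPowerAssoc
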